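/- arXiv:1504.00210 — 2 statements merged into one kernel-verified Lean document; each statement's English description precedes it below -/
import Mathlib

section
/- (Homothety Theorem) There exists a real number c such that the linear part of the composite affine map T ∘ T' is c times the identity (so T ∘ T' is a homothety or a translation); moreover (T ∘ T')(K(P)) = P. Consequently, if P ≠ G and X is any fixed point of T ∘ T', then X lies on the line through P and K(P). -/
open EuclideanGeometry Affine

local notation "Pt" => EuclideanSpace ℝ (Fin 2)

/-!
Write `P = a • A + b • B + c • C` with `a + b + c = 1`. Then `D, E, F` have barycentric
coordinates `(0 : b : c), (a : 0 : c), (a : b : 0)`, and their reflections `D3, E3, F3` have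
`(0 : c : b), (c : 0 : a), (b : a : 0)`. A direct computation gives
`(T ∘ T')(B) - (T ∘ T')(A) = κ • (B - A)` with `κ = 2abc / ((a + b)(b + c)(c + a))`, which
is symmetric in `a, b, c`; by cyclic symmetry the same holds for `C - B`, so the linear part
of `T ∘ T'` is `κ • id`. The complement `K(P) = (b + c : c + a : a + b)` is fixed by `T'` and
sent to `P` by `T`. Finally, a fixed point `X` of a map with linear part `κ • id` sending `K(P)`
to `P` satisfies `P - X = κ • (K(P) - X)`.
-/

theorem Collinear.exists_lineMap_eq {k P V : Type*} [DivisionRing k] [AddCommGroup V] [Module k V]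
    [AddTorsor V P] {p q x : P} (h : Collinear k {p, q, x}) (hpq : p ≠ q) :
    ∃ t : k, AffineMap.lineMap p q t = x :=
  mem_affineSpan_pair_iff_exists_lineMap_eq.mp <|
    h.mem_affineSpan_of_mem_of_ne (by simp) (by simp) (by simp) hpq

theorem collinear_of_linear_eq_smul_id {k P V : Type*} [Field k] [AddCommGroup V] [Module k V]
    [AddTorsor V P] {f : P →ᵃ[k] P} {c : k} (hf : f.linear = c • LinearMap.id) {p q x : P}
    (hq : f q = p) (hx : f x = x) : Collinear k {p, q, x} := by
  have hpx : p -ᵥ x = c • (q -ᵥ x) := by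
    rw [← hq, ← hx, ← f.linearMap_vsub, hf, hx]
    rfl
  rw [collinear_iff_of_mem (by simp : x ∈ ({p, q, x} : Set P))]
  refine ⟨q -ᵥ x, ?_⟩
  simp only [Set.mem_insert_iff, Set.mem_singleton_iff, forall_eq_or_imp, forall_eq]
  exact ⟨⟨c, by rw [← hpx, vsub_vadd]⟩, ⟨1, by rw [one_smul, vsub_vadd]⟩,
    ⟨0, by rw [zero_smul, zero_vadd]⟩⟩

theorem LinearMap.eq_smul_id_of_linearIndependent {k V ι : Type*} [Field k] [AddCommGroup V]
    [Module k V] [FiniteDimensional k V] [Fintype ι] [Nonempty ι] {v : ι → V}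
    (hv : LinearIndependent k v) (hcard : Fintype.card ι = Module.finrank k V)
    {L : V →ₗ[k] V} {c : k} (hL : ∀ i, L (v i) = c • v i) : L = c • LinearMap.id :=
  (basisOfLinearIndependentOfCardEqFinrank hv hcard).ext fun i => by simp [hL]

variable {k V : Type*} [Field k] [AddCommGroup V] [Module k V]

namespace AffineIndependent

variable {A B C : V}

theorem eq_zero_of_smul_add_smul_add_smul (h : AffineIndependent k ![A, B, C]) {x y z : k}
    (hs : x + y + z = 0) (hv : x • A + y • B + z • C = 0) : x = 0 ∧ y = 0 ∧ z = 0 := by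
  have hw := h.eq_zero_of_sum_eq_zero (s := Finset.univ) (w := ![x, y, z])
    (by simpa [Fin.sum_univ_three] using hs) (by simpa [Fin.sum_univ_three] using hv)
  exact ⟨hw 0 (by simp), hw 1 (by simp), hw 2 (by simp)⟩

theorem linearIndependent_sub (h : AffineIndependent k ![A, B, C]) :
    LinearIndependent k ![B - A, C - A] := by
  refine LinearIndependent.pair_iff.mpr fun s t hst => ?_
  obtain ⟨-, hs, ht⟩ := h.eq_zero_of_smul_add_smul_add_smul (x := -s - t) (y := s) (z := t)
    (by ring) (by rw [← hst]; module)
  exact ⟨hs, ht⟩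

theorem rotate (h : AffineIndependent k ![A, B, C]) : AffineIndependent k ![B, C, A] :=
  h.comm_left.comm_right

theorem exists_eq_smul_add_smul_add_smul [FiniteDimensional k V]
    (h : AffineIndependent k ![A, B, C]) (hV : Module.finrank k V = 2) (P : V) :
    ∃ a b c : k, a + b + c = 1 ∧ P = a • A + b • B + c • C := by
  have hspan : affineSpan k (Set.range ![A, B, C]) = ⊤ :=
    h.affineSpan_eq_top_iff_card_eq_finrank_add_one.mpr (by simp [hV])
  obtain ⟨w, hw, hP⟩ := eq_affineCombination_of_mem_affineSpan_of_fintype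
    (hspan ▸ AffineSubspace.mem_top k V P)
  refine ⟨w 0, w 1, w 2, by simpa [Fin.sum_univ_three, add_assoc] using hw, ?_⟩
  rw [hP, Finset.affineCombination_eq_linear_combination _ _ _ hw]
  simp [Fin.sum_univ_three, add_assoc]

theorem cevian_foot_eq {P D : V} {a b c : k} (h : AffineIndependent k ![A, B, C])
    (habc : a + b + c = 1) (hP : P = a • A + b • B + c • C) (hAP : A ≠ P)
    (hD : Collinear k {B, C, D}) (hDcev : Collinear k {A, P, D}) :
    b + c ≠ 0 ∧ D = (b + c)⁻¹ • (b • B + c • C) := by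
  obtain ⟨s, rfl⟩ := hD.exists_lineMap_eq (h.injective.ne (by decide : (1 : Fin 3) ≠ 2))
  obtain ⟨t, ht⟩ := hDcev.exists_lineMap_eq hAP
  rw [AffineMap.lineMap_apply_module, AffineMap.lineMap_apply_module, hP] at ht
  obtain ⟨-, hb, hc⟩ := h.eq_zero_of_smul_add_smul_add_smul (x := 1 - t + t * a)
    (y := t * b - (1 - s)) (z := t * c - s) (by linear_combination t * habc)
    (by rw [← sub_eq_zero.mpr ht]; module)
  have htbc : t * (b + c) = 1 := by linear_combination hb + hc
  refine ⟨right_ne_zero_of_mul_eq_one htbc, ?_⟩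
  rw [AffineMap.lineMap_apply_module, ← eq_inv_of_mul_eq_one_left htbc]
  match_scalars
  · linear_combination -hb
  · linear_combination -hc

end AffineIndependent

theorem pointReflection_midpoint_inv_smul [Invertible (2 : k)] {B C : V} {b c : k}
    (hbc : b + c ≠ 0) :
    Equiv.pointReflection (midpoint k B C) ((b + c)⁻¹ • (b • B + c • C)) =
      (b + c)⁻¹ • (c • B + b • C) := by
  rw [Equiv.pointReflection_apply, vsub_eq_sub, vadd_eq_add, midpoint_eq_smul_add]
  have h2 : (2 : k) * ⅟2 = 1 := mul_invOf_self 2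
  match_scalars <;> field_simp <;> linear_combination (b + c) * h2

theorem AffineMap.apply_eq_linear_add {W : Type*} [AddCommGroup W] [Module k W]
    (f : V →ᵃ[k] W) (X : V) : f X = f.linear X + f 0 :=
  congrFun f.decomp X

theorem AffineMap.linear_apply_eq_sub {W : Type*} [AddCommGroup W] [Module k W]
    (f : V →ᵃ[k] W) (X : V) : f.linear X = f X - f 0 :=
  congrFun f.decomp' X

section CevianMaps

variable (T T' : V →ᵃ[k] V) (A B C : V) (a b c : k)

/-- `T` sends `A, B, C` to the cevian traces on `BC, CA, AB` of the point with barycentric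
coordinates `(a : b : c)`; `IsReflectedCevianMap` sends them to the reflections of these traces
in the midpoints of the sides. -/
structure IsCevianMap : Prop where
  map_A : T A = (b + c)⁻¹ • (b • B + c • C)
  map_B : T B = (c + a)⁻¹ • (c • C + a • A)
  map_C : T C = (a + b)⁻¹ • (a • A + b • B)

structure IsReflectedCevianMap : Prop where
  map_A : T A = (b + c)⁻¹ • (c • B + b • C)
  map_B : T B = (c + a)⁻¹ • (a • C + c • A)
  map_C : T C = (a + b)⁻¹ • (b • A + a • B)

variable {T T' A B C a b c}

theorem IsCevianMap.rotate (h : IsCevianMap T A B C a b c) : IsCevianMap T B C A b c a :=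
  ⟨h.map_B, h.map_C, h.map_A⟩

theorem IsReflectedCevianMap.rotate (h : IsReflectedCevianMap T A B C a b c) :
    IsReflectedCevianMap T B C A b c a :=
  ⟨h.map_B, h.map_C, h.map_A⟩

theorem IsCevianMap.linear_comp_apply_sub (hT : IsCevianMap T A B C a b c)
    (hT' : IsReflectedCevianMap T' A B C a b c) (hbc : b + c ≠ 0) (hca : c + a ≠ 0)
    (hab : a + b ≠ 0) :
    (T.comp T').linear (B - A) = (2 * a * b * c / ((a + b) * (b + c) * (c + a))) • (B - A) := by
  rw [← vsub_eq_sub, AffineMap.linearMap_vsub, AffineMap.comp_apply, AffineMap.comp_apply,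
    hT'.map_A, hT'.map_B, vsub_eq_sub, vsub_eq_sub, T.apply_eq_linear_add,
    T.apply_eq_linear_add (_ • _)]
  simp only [map_smul, map_add, T.linear_apply_eq_sub A, T.linear_apply_eq_sub B,
    T.linear_apply_eq_sub C, hT.map_A, hT.map_B, hT.map_C]
  match_scalars <;> field_simp <;> ring

theorem IsCevianMap.linear_comp_eq_smul_id [FiniteDimensional k V] (hV : Module.finrank k V = 2)
    (hABC : AffineIndependent k ![A, B, C]) (hT : IsCevianMap T A B C a b c)
    (hT' : IsReflectedCevianMap T' A B C a b c) (hbc : b + c ≠ 0) (hca : c + a ≠ 0)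
    (hab : a + b ≠ 0) :
    (T.comp T').linear = (2 * a * b * c / ((a + b) * (b + c) * (c + a))) • LinearMap.id := by
  have hAB := hT.linear_comp_apply_sub hT' hbc hca hab
  have hBC := hT.rotate.linear_comp_apply_sub hT'.rotate hca hab hbc
  rw [show 2 * b * c * a / ((b + c) * (c + a) * (a + b)) =
    2 * a * b * c / ((a + b) * (b + c) * (c + a)) by ring] at hBC
  refine LinearMap.eq_smul_id_of_linearIndependent hABC.linearIndependent_sub (by simp [hV])
    (Fin.forall_fin_two.mpr ⟨hAB, ?_⟩)
  change (T.comp T').linear (C - A) = _ • (C - A)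
  rw [show C - A = (C - B) + (B - A) by abel, map_add, hAB, hBC, smul_add]

theorem IsReflectedCevianMap.apply_complement [NeZero (2 : k)]
    (hT' : IsReflectedCevianMap T' A B C a b c) (habc : a + b + c = 1) (hbc : b + c ≠ 0)
    (hca : c + a ≠ 0) (hab : a + b ≠ 0) :
    T' ((2⁻¹ : k) • ((b + c) • A + (c + a) • B + (a + b) • C)) =
      (2⁻¹ : k) • ((b + c) • A + (c + a) • B + (a + b) • C) := by
  rw [T'.apply_eq_linear_add]
  simp only [map_smul, map_add, T'.linear_apply_eq_sub A, T'.linear_apply_eq_sub B,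
    T'.linear_apply_eq_sub C, hT'.map_A, hT'.map_B, hT'.map_C]
  obtain rfl : a = 1 - b - c := by linear_combination habc
  match_scalars <;> field_simp <;> ring

theorem IsCevianMap.apply_complement [NeZero (2 : k)]
    (hT : IsCevianMap T A B C a b c) (habc : a + b + c = 1) (hbc : b + c ≠ 0)
    (hca : c + a ≠ 0) (hab : a + b ≠ 0) :
    T ((2⁻¹ : k) • ((b + c) • A + (c + a) • B + (a + b) • C)) =
      a • A + b • B + c • C := by
  rw [T.apply_eq_linear_add]
  simp only [map_smul, map_add, T.linear_apply_eq_sub A, T.linear_apply_eq_sub B,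
    T.linear_apply_eq_sub C, hT.map_A, hT.map_B, hT.map_C]
  obtain rfl : a = 1 - b - c := by linear_combination habc
  match_scalars <;> field_simp <;> ring

end CevianMaps

theorem stmt_13_general (A B C G P D E F D0 E0 F0 D3 E3 F3 : Pt) (T T' : Pt →ᵃ[ℝ] Pt)
(hABC : AffineIndependent ℝ ![A, B, C])
    (hG : G = (1/3 : ℝ) • (A + B + C))
    (hPb : ¬ Collinear ℝ {C, A, P})
    (hPc : ¬ Collinear ℝ {A, B, P})
    (hD : Collinear ℝ {B, C, D}) (hDcev : Collinear ℝ {A, P, D})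
    (hE : Collinear ℝ {C, A, E}) (hEcev : Collinear ℝ {B, P, E})
    (hF : Collinear ℝ {A, B, F}) (hFcev : Collinear ℝ {C, P, F})
    (hD0 : D0 = midpoint ℝ B C) (hE0 : E0 = midpoint ℝ C A) (hF0 : F0 = midpoint ℝ A B)
(hD3 : D3 = Equiv.pointReflection D0 D)
    (hE3 : E3 = Equiv.pointReflection E0 E)
    (hF3 : F3 = Equiv.pointReflection F0 F)
    (hTA : T A = D) (hTB : T B = E) (hTC : T C = F)
    (hT'A : T' A = D3) (hT'B : T' B = E3) (hT'C : T' C = F3) :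
    (∃ c : ℝ, (T.comp T').linear = c • LinearMap.id) ∧
      (T.comp T') (AffineMap.homothety G (-1/2 : ℝ) P) = P ∧
      (P ≠ G → ∀ X : Pt, (T.comp T') X = X →
        Collinear ℝ {P, AffineMap.homothety G (-1/2 : ℝ) P, X}) := by
  obtain ⟨a, b, c, habc, hP⟩ :=
    hABC.exists_eq_smul_add_smul_add_smul finrank_euclideanSpace_fin P
  have hAP : A ≠ P := by rintro rfl; exact hPb (by simpa using collinear_pair ℝ C A)
  have hBP : B ≠ P := by rintro rfl; exact hPc (by simpa using collinear_pair ℝ A B)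
  have hCP : C ≠ P := by
    rintro rfl; exact hPb (by simpa [Set.pair_comm] using collinear_pair ℝ C A)
  obtain ⟨hbc, rfl⟩ := hABC.cevian_foot_eq habc hP hAP hD hDcev
  obtain ⟨hca, rfl⟩ := hABC.rotate.cevian_foot_eq (a := b) (b := c) (c := a)
    (by linear_combination habc) (by rw [hP]; abel) hBP hE hEcev
  obtain ⟨hab, rfl⟩ := hABC.rotate.rotate.cevian_foot_eq (a := c) (b := a) (c := b)
    (by linear_combination habc) (by rw [hP]; abel) hCP hF hFcev
  have hT : IsCevianMap T A B C a b c := ⟨hTA, hTB, hTC⟩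
  have hT' : IsReflectedCevianMap T' A B C a b c :=
    ⟨by rw [hT'A, hD3, hD0, pointReflection_midpoint_inv_smul hbc],
      by rw [hT'B, hE3, hE0, pointReflection_midpoint_inv_smul hca],
      by rw [hT'C, hF3, hF0, pointReflection_midpoint_inv_smul hab]⟩
  have hK : AffineMap.homothety G (-1/2 : ℝ) P =
      (2⁻¹ : ℝ) • ((b + c) • A + (c + a) • B + (a + b) • C) := by
    rw [AffineMap.homothety_apply, hG, hP, vsub_eq_sub, vadd_eq_add]
    match_scalars <;> linear_combination (-1/2 : ℝ) * habc
  have hlin := hT.linear_comp_eq_smul_id finrank_euclideanSpace_fin hABC hT' hbc hca hab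
  have hfix : (T.comp T') (AffineMap.homothety G (-1/2 : ℝ) P) = P := by
    rw [hK, AffineMap.comp_apply, hT'.apply_complement habc hbc hca hab,
      hT.apply_complement habc hbc hca hab, hP]
  exact ⟨⟨_, hlin⟩, hfix, fun _ X hX => collinear_of_linear_eq_smul_id hlin hfix hX⟩

theorem stmt_13 (A B C G P D E F D0 E0 F0 D3 E3 F3 : Pt) (T T' : Pt →ᵃ[ℝ] Pt)
(hABC : AffineIndependent ℝ ![A, B, C])
    (hG : G = (1/3 : ℝ) • (A + B + C))
    (hPa : ¬ Collinear ℝ {B, C, P})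
    (hPb : ¬ Collinear ℝ {C, A, P})
    (hPc : ¬ Collinear ℝ {A, B, P})
    (hD : Collinear ℝ {B, C, D}) (hDcev : Collinear ℝ {A, P, D})
    (hE : Collinear ℝ {C, A, E}) (hEcev : Collinear ℝ {B, P, E})
    (hF : Collinear ℝ {A, B, F}) (hFcev : Collinear ℝ {C, P, F})
    (hD0 : D0 = midpoint ℝ B C) (hE0 : E0 = midpoint ℝ C A) (hF0 : F0 = midpoint ℝ A B)
(hD3 : D3 = Equiv.pointReflection D0 D)
    (hE3 : E3 = Equiv.pointReflection E0 E)
    (hF3 : F3 = Equiv.pointReflection F0 F)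
    (hTA : T A = D) (hTB : T B = E) (hTC : T C = F)
    (hT'A : T' A = D3) (hT'B : T' B = E3) (hT'C : T' C = F3) :
    (∃ c : ℝ, (T.comp T').linear = c • LinearMap.id) ∧
      (T.comp T') (AffineMap.homothety G (-1/2 : ℝ) P) = P ∧
      (P ≠ G → ∀ X : Pt, (T.comp T') X = X →
        Collinear ℝ {P, AffineMap.homothety G (-1/2 : ℝ) P, X}) :=
  stmt_13_general A B C G P D E F D0 E0 F0 D3 E3 F3 T T' hABC hG hPb hPc hD hDcev hE hEcev hF hFcev
    hD0 hE0 hF0 hD3 hE3 hF3 hTA hTB hTC hT'A hT'B hT'C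
end

section
/- Assume D, E, F are affinely independent. Let A' be a point with A' ≠ B, A' ≠ C, such that the line BA' is parallel to the line DF and the line CA' is parallel to the line DE. Then A, A', Q are collinear. (Together with the analogous statements at B and C, this says the triangle formed by the parallels through A, B, C to the sides EF, DF, DE of the cevian triangle is the anticevian triangle of Q.) -/
open EuclideanGeometry Affine

local notation "Pt" => EuclideanSpace ℝ (Fin 2)

/-!
In barycentric coordinates with respect to `ABC`, write `P = (u : v : w)`. Then
`D = (0 : v : w)`, `E = (u : 0 : w)`, `F = (u : v : 0)`, the isotomic conjugate `P' = (x₁, x₂, x₃)`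
satisfies `u x₁ = v x₂ = w x₃`, and `Q = (A + B + C - P') / 2`. The parallels through `B` and `C`
to `DF` and `DE` meet at `A' = (-u(v + w) : v(w + u) : w(u + v))`, and a direct computation gives
`Q = A + x₁ • (A' - A)`.
-/

section Collinear

variable {k V : Type*} [Field k] [AddCommGroup V] [Module k V]

theorem linearIndependent_sub_iff_not_collinear (A X Y : V) :
    LinearIndependent k ![X - A, Y - A] ↔ ¬ Collinear k {A, X, Y} := by
  rw [← affineIndependent_iff_not_collinear_set, affineIndependent_iff_linearIndependent_vsub k _ 0,
    ← linearIndependent_equiv' (finSuccAboveEquiv 0) (g := ![X - A, Y - A])]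
  funext i
  fin_cases i <;> rfl

theorem LinearIndependent.pair_smul_add_smul_iff {u v : V} (h : LinearIndependent k ![u, v])
    (a b c d : k) :
    LinearIndependent k ![a • u + b • v, c • u + d • v] ↔ a * d - b * c ≠ 0 := by
  rw [LinearIndependent.pair_iff] at h ⊢
  constructor
  · intro hli hdet
    obtain ⟨rfl, hb⟩ := hli d (-b) (by linear_combination (norm := module) hdet • u)
    obtain ⟨hc, rfl⟩ := hli (-c) a (by linear_combination (norm := module) hdet • v)
    rw [neg_eq_zero] at hb hc
    subst hb hc
    exact one_ne_zero (hli 1 0 (by simp)).1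
  · intro hdet s t hst
    obtain ⟨h₁, h₂⟩ := h (s * a + t * c) (s * b + t * d) (by rw [← hst]; module)
    constructor
    · apply (mul_eq_zero.1 _).resolve_right hdet
      linear_combination d * h₁ - c * h₂
    · apply (mul_eq_zero.1 _).resolve_right hdet
      linear_combination a * h₂ - b * h₁

theorem AffineSubspace.Parallel.exists_vsub_eq_smul_vsub {P : Type*} [AddTorsor V P]
    {p₁ p₂ p₃ p₄ : P} (h : line[k, p₁, p₂] ∥ line[k, p₃, p₄]) :
    ∃ t : k, p₂ -ᵥ p₁ = t • (p₄ -ᵥ p₃) := by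
  have hmem : p₂ -ᵥ p₁ ∈ (line[k, p₃, p₄]).direction := by
    rw [← h.direction_eq]
    exact AffineSubspace.vsub_mem_direction (right_mem_affineSpan_pair k p₁ p₂)
      (left_mem_affineSpan_pair k p₁ p₂)
  rw [direction_affineSpan, vectorSpan_pair_rev, Submodule.mem_span_singleton] at hmem
  obtain ⟨t, ht⟩ := hmem
  exact ⟨t, ht.symm⟩

theorem eq_of_sub_eq_smul_of_linearIndependent {d₁ d₂ B C X Y : V} {t s t' s' : k}
    (h : LinearIndependent k ![d₁, d₂]) (hX₁ : X - B = t • d₁) (hX₂ : X - C = s • d₂)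
    (hY₁ : Y - B = t' • d₁) (hY₂ : Y - C = s' • d₂) : X = Y := by
  rw [LinearIndependent.pair_iff] at h
  obtain ⟨ht, -⟩ := h (t - t') (s' - s)
    (by linear_combination (norm := module) hY₁ - hX₁ + hX₂ - hY₂)
  linear_combination (norm := module) hX₁ - hY₁ + ht • d₁

end Collinear

section Triangle

variable {k V : Type*} [Field k] [AddCommGroup V] [Module k V] {A B C : V}

theorem exists_eq_smul_add_smul_add_smul (hABC : ¬ Collinear k {A, B, C})
    (hV : Module.finrank k V = 2) (X : V) :
    ∃ a b c : k, a + b + c = 1 ∧ X = a • A + b • B + c • C := by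
  have hspan := ((linearIndependent_sub_iff_not_collinear A B C).2 hABC)
    |>.span_eq_top_of_card_eq_finrank (by simp [hV])
  rw [Matrix.range_cons_cons_empty] at hspan
  obtain ⟨b, c, hbc⟩ := Submodule.mem_span_pair.1 (hspan ▸ Submodule.mem_top (x := X - A))
  exact ⟨1 - b - c, b, c, by ring, by linear_combination (norm := module) -hbc⟩

theorem collinear_vertex_smul_add_smul_iff {b c x₁ x₂ x₃ : k} (hABC : ¬ Collinear k {A, B, C})
    (hbc : b + c = 1) (hx : x₁ + x₂ + x₃ = 1) :
    Collinear k {A, b • B + c • C, x₁ • A + x₂ • B + x₃ • C} ↔ b * x₃ = c * x₂ := by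
  have hli := (linearIndependent_sub_iff_not_collinear A B C).2 hABC
  rw [← not_iff_not, ← linearIndependent_sub_iff_not_collinear,
    show b • B + c • C - A = b • (B - A) + c • (C - A) by
      linear_combination (norm := module) hbc • A,
    show x₁ • A + x₂ • B + x₃ • C - A = x₂ • (B - A) + x₃ • (C - A) by
      linear_combination (norm := module) hx • A,
    hli.pair_smul_add_smul_iff, sub_ne_zero]

theorem collinear_vertex_vertex_iff {x₁ x₂ x₃ : k} (hABC : ¬ Collinear k {A, B, C})
    (hx : x₁ + x₂ + x₃ = 1) :
    Collinear k {A, B, x₁ • A + x₂ • B + x₃ • C} ↔ x₃ = 0 := by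
  simpa using collinear_vertex_smul_add_smul_iff (b := 1) (c := 0) hABC (by simp) hx


theorem cevian_trace_eq {u v w : k} {D : V} (hABC : ¬ Collinear k {A, B, C})
    (huvw : u + v + w = 1) (hv : v ≠ 0) (hD : Collinear k {B, C, D})
    (hAD : Collinear k {A, u • A + v • B + w • C, D}) :
    v + w ≠ 0 ∧ D = (v + w)⁻¹ • (v • B + w • C) := by
  have hBC : B ≠ C := by
    rintro rfl
    exact hABC (by simpa using collinear_pair k A B)
  obtain ⟨s, rfl⟩ := mem_affineSpan_pair_iff_exists_lineMap_eq.1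
    (hD.mem_affineSpan_of_mem_of_ne (p₃ := D) (by simp) (by simp) (by simp) hBC)
  rw [AffineMap.lineMap_apply_module, Set.pair_comm,
    collinear_vertex_smul_add_smul_iff hABC (by ring) huvw] at hAD
  have hvw : v + w ≠ 0 := fun h ↦ hv (by linear_combination (1 - s) * h - hAD)
  have hs : s = w / (v + w) := by
    field_simp
    linear_combination -hAD
  refine ⟨hvw, ?_⟩
  rw [AffineMap.lineMap_apply_module, hs]
  match_scalars <;> field_simp
  ring

theorem collinear_pointReflection_cevian_trace_iff [Invertible (2 : k)] {v w x₁ x₂ x₃ : k}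
    (hABC : ¬ Collinear k {A, B, C}) (hvw : v + w ≠ 0) (hx : x₁ + x₂ + x₃ = 1) :
    Collinear k {A, Equiv.pointReflection (midpoint k B C) ((v + w)⁻¹ • (v • B + w • C)),
      x₁ • A + x₂ • B + x₃ • C} ↔ v * x₂ = w * x₃ := by
  have hrefl : Equiv.pointReflection (midpoint k B C) ((v + w)⁻¹ • (v • B + w • C)) =
      (w / (v + w)) • B + (v / (v + w)) • C := by
    rw [Equiv.pointReflection_apply, vsub_eq_sub, vadd_eq_add, sub_add_eq_add_sub,
      midpoint_add_self]
    match_scalars <;> field_simp <;> ring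
  rw [hrefl, collinear_vertex_smul_add_smul_iff hABC (by field_simp; ring) hx]
  field_simp
  exact eq_comm

theorem eq_of_parallel_cevian_triangle_sides [CharZero k] {u v w : k} {D E F A' : V}
    (hDEF : ¬ Collinear k {D, E, F})
    (hv : v ≠ 0) (hw : w ≠ 0) (hvw : v + w ≠ 0) (hwu : w + u ≠ 0) (huv : u + v ≠ 0)
    (hD : D = (v + w)⁻¹ • (v • B + w • C)) (hE : E = (w + u)⁻¹ • (w • C + u • A))
    (hF : F = (u + v)⁻¹ • (u • A + v • B))
    (hBA' : line[k, B, A'] ∥ line[k, D, F]) (hCA' : line[k, C, A'] ∥ line[k, D, E]) :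
    A' = (2 * v * w)⁻¹ • (-(u * (v + w)) • A + (v * (w + u)) • B + (w * (u + v)) • C) := by
  obtain ⟨t, ht⟩ := hBA'.exists_vsub_eq_smul_vsub
  obtain ⟨s, hs⟩ := hCA'.exists_vsub_eq_smul_vsub
  have hli : LinearIndependent k ![F - D, E - D] :=
    (linearIndependent_sub_iff_not_collinear D F E).2 (by rwa [Set.pair_comm])
  -- the claimed point lies on both parallels, which meet only once since `DF ∦ DE`
  refine eq_of_sub_eq_smul_of_linearIndependent hli ht hs
    (t' := -((u + v) * (v + w) / (2 * v * w))) (s' := -((w + u) * (v + w) / (2 * v * w))) ?_ ?_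
  · rw [hD, hF]
    match_scalars <;> field_simp
    ring
  · rw [hD, hE]
    match_scalars <;> field_simp
    ring

theorem collinear_vertex_anticevian_isotomcomplement [CharZero k] {u v w x₁ x₂ x₃ : k}
    (hv : v ≠ 0) (hw : w ≠ 0) (hx : x₁ + x₂ + x₃ = 1)
    (h₁ : u * x₁ = w * x₃) (h₂ : v * x₂ = w * x₃) :
    Collinear k {A,
      (2 * v * w)⁻¹ • (-(u * (v + w)) • A + (v * (w + u)) • B + (w * (u + v)) • C),
      AffineMap.homothety ((1 / 3 : k) • (A + B + C)) (-1 / 2 : k) (x₁ • A + x₂ • B + x₃ • C)} := by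
  set A' := (2 * v * w)⁻¹ • (-(u * (v + w)) • A + (v * (w + u)) • B + (w * (u + v)) • C)
  have hQ : AffineMap.homothety ((1 / 3 : k) • (A + B + C)) (-1 / 2 : k)
      (x₁ • A + x₂ • B + x₃ • C) = AffineMap.lineMap A A' x₁ := by
    simp only [AffineMap.homothety_apply, AffineMap.lineMap_apply_module, vsub_eq_sub,
      vadd_eq_add, A']
    match_scalars <;> field_simp
    · linear_combination 3 * v * w * hx + 3 * v * h₁ + 3 * w * (h₁ - h₂)
    · linear_combination -3 * h₁ - 3 * w * hx
    · linear_combination 3 * h₂ - 3 * h₁ - 3 * v * hx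
  rw [hQ]
  exact collinear_triple_of_mem_affineSpan_pair (left_mem_affineSpan_pair k A A')
    (right_mem_affineSpan_pair k A A') (AffineMap.lineMap_mem_affineSpan_pair _ _ _)

end Triangle

theorem stmt_14_general (A B C G P D E F D0 E0 D3 E3 P' Q A' : Pt)
(hABC : AffineIndependent ℝ ![A, B, C])
    (hG : G = (1/3 : ℝ) • (A + B + C))
    (hPa : ¬ Collinear ℝ {B, C, P})
    (hPb : ¬ Collinear ℝ {C, A, P})
    (hPc : ¬ Collinear ℝ {A, B, P})
    (hD : Collinear ℝ {B, C, D}) (hDcev : Collinear ℝ {A, P, D})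
    (hE : Collinear ℝ {C, A, E}) (hEcev : Collinear ℝ {B, P, E})
    (hF : Collinear ℝ {A, B, F}) (hFcev : Collinear ℝ {C, P, F})
    (hD0 : D0 = midpoint ℝ B C) (hE0 : E0 = midpoint ℝ C A)
(hD3 : D3 = Equiv.pointReflection D0 D)
    (hE3 : E3 = Equiv.pointReflection E0 E)
(hP'a : Collinear ℝ {A, D3, P'})
    (hP'b : Collinear ℝ {B, E3, P'})
    (hQ : Q = AffineMap.homothety G (-1/2 : ℝ) P')
    (hDEF : AffineIndependent ℝ ![D, E, F])
    (hBA' : line[ℝ, B, A'] ∥ line[ℝ, D, F])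
    (hCA' : line[ℝ, C, A'] ∥ line[ℝ, D, E]) :
    Collinear ℝ {A, A', Q} := by
  replace hABC := affineIndependent_iff_not_collinear_set.1 hABC
  have hBCA : ¬ Collinear ℝ {B, C, A} := by rwa [Set.pair_comm C A, Set.insert_comm B A]
  have hCAB : ¬ Collinear ℝ {C, A, B} := by rwa [Set.pair_comm A B, Set.insert_comm C B]
  obtain ⟨u, v, w, huvw, rfl⟩ := exists_eq_smul_add_smul_add_smul hABC finrank_euclideanSpace_fin P
  have hvwu : v + w + u = 1 := by linear_combination huvw
  have hwuv : w + u + v = 1 := by linear_combination huvw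
  rw [show u • A + v • B + w • C = v • B + w • C + u • A by abel] at hPa hEcev
  rw [show u • A + v • B + w • C = w • C + u • A + v • B by abel] at hPb hFcev
  have hu : u ≠ 0 := fun h ↦ hPa ((collinear_vertex_vertex_iff hBCA hvwu).2 h)
  have hv : v ≠ 0 := fun h ↦ hPb ((collinear_vertex_vertex_iff hCAB hwuv).2 h)
  have hw : w ≠ 0 := fun h ↦ hPc ((collinear_vertex_vertex_iff hABC huvw).2 h)
  obtain ⟨hvw, rfl⟩ := cevian_trace_eq hABC huvw hv hD hDcev
  obtain ⟨hwu, rfl⟩ := cevian_trace_eq hBCA hvwu hw hE hEcev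
  obtain ⟨huv, rfl⟩ := cevian_trace_eq hCAB hwuv hu hF hFcev
  obtain ⟨x₁, x₂, x₃, hx, rfl⟩ :=
    exists_eq_smul_add_smul_add_smul hABC finrank_euclideanSpace_fin P'
  subst hD0 hE0 hD3 hE3 hQ hG
  have h₂ := (collinear_pointReflection_cevian_trace_iff hABC hvw hx).1 hP'a
  rw [show x₁ • A + x₂ • B + x₃ • C = x₂ • B + x₃ • C + x₁ • A by abel] at hP'b
  have h₁ := (collinear_pointReflection_cevian_trace_iff hBCA hwu (by linear_combination hx)).1 hP'b
  rw [eq_of_parallel_cevian_triangle_sides (affineIndependent_iff_not_collinear_set.1 hDEF)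
    hv hw hvw hwu huv rfl rfl rfl hBA' hCA']
  exact collinear_vertex_anticevian_isotomcomplement hv hw hx h₁.symm h₂

theorem stmt_14 (A B C G P D E F D0 E0 F0 D3 E3 F3 P' Q A' : Pt)
(hABC : AffineIndependent ℝ ![A, B, C])
    (hG : G = (1/3 : ℝ) • (A + B + C))
    (hPa : ¬ Collinear ℝ {B, C, P})
    (hPb : ¬ Collinear ℝ {C, A, P})
    (hPc : ¬ Collinear ℝ {A, B, P})
    (hD : Collinear ℝ {B, C, D}) (hDcev : Collinear ℝ {A, P, D})
    (hE : Collinear ℝ {C, A, E}) (hEcev : Collinear ℝ {B, P, E})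
    (hF : Collinear ℝ {A, B, F}) (hFcev : Collinear ℝ {C, P, F})
    (hD0 : D0 = midpoint ℝ B C) (hE0 : E0 = midpoint ℝ C A) (hF0 : F0 = midpoint ℝ A B)
(hD3 : D3 = Equiv.pointReflection D0 D)
    (hE3 : E3 = Equiv.pointReflection E0 E)
    (hF3 : F3 = Equiv.pointReflection F0 F)
(hP'a : Collinear ℝ {A, D3, P'})
    (hP'b : Collinear ℝ {B, E3, P'})
    (hP'c : Collinear ℝ {C, F3, P'})
    (hQ : Q = AffineMap.homothety G (-1/2 : ℝ) P')
    (hDEF : AffineIndependent ℝ ![D, E, F])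
    (hA'B : A' ≠ B) (hA'C : A' ≠ C)
    (hBA' : line[ℝ, B, A'] ∥ line[ℝ, D, F])
    (hCA' : line[ℝ, C, A'] ∥ line[ℝ, D, E]) :
    Collinear ℝ {A, A', Q} :=
  stmt_14_general A B C G P D E F D0 E0 D3 E3 P' Q A' hABC hG hPa hPb hPc hD hDcev hE hEcev hF hFcev
    hD0 hE0 hD3 hE3 hP'a hP'b hQ hDEF hBA' hCA'
end
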